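/- Let G be a finite group. Direct limits (colimits of directed systems) and reflexive coequalizers in the category Tamb(G) of Tambara functors exist and are created by the forgetful functor to Mack(G); consequently the free Tambara functor functor T : Mack(G) → Tamb(G), being left adjoint to the forgetful functor, preserves direct limits and reflexive coequalizers. -/

import Mathlib

set_option autoImplicit false

namespace Tamb

variable {G : Type} [Group G]

/-- A function between `G`-sets is equivariant. -/
def IsEquivariant (G : Type) [Group G] {A B : Type} [SMul G A] [SMul G B] (f : A → B) : Prop :=
  ∀ (g : G) (a : A), f (g • a) = g • f a

section Maps

variable {X Y Z : Type} [MulAction G X] [MulAction G Y] [MulAction G Z]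

/-- The identity equivariant map. -/
def gid (G X : Type) [Group G] [MulAction G X] : X →[G] X :=
  ⟨fun x => x, fun _ _ => rfl⟩

@[simp] theorem gid_apply (x : X) : gid G X x = x := rfl

/-- Composition of equivariant maps. -/
def gcomp (j : Y →[G] Z) (i : X →[G] Y) : X →[G] Z :=
  ⟨fun x => j (i x), fun g x => by
    show j (i (g • x)) = g • j (i x)
    rw [MulActionHom.map_smul, MulActionHom.map_smul]⟩

@[simp] theorem gcomp_apply (j : Y →[G] Z) (i : X →[G] Y) (x : X) : gcomp j i x = j (i x) := rfl

/-- The pullback of two equivariant maps of `G`-sets. -/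
def Pb (f : X →[G] Z) (g : Y →[G] Z) : Type := {p : X × Y // f p.1 = g p.2}

namespace Pb

variable (f : X →[G] Z) (g : Y →[G] Z)

instance : SMul G (Pb f g) :=
  ⟨fun a p => ⟨(a • p.1.1, a • p.1.2), by
    rw [MulActionHom.map_smul, MulActionHom.map_smul, p.2]⟩⟩

instance : MulAction G (Pb f g) where
  one_smul p := Subtype.ext (Prod.ext (one_smul _ _) (one_smul _ _))
  mul_smul a b p := Subtype.ext (Prod.ext (mul_smul _ _ _) (mul_smul _ _ _))

instance [Finite X] [Finite Y] : Finite (Pb f g) := Subtype.finite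

/-- First projection of a pullback. -/
def fstHom : Pb f g →[G] X := ⟨fun p => p.1.1, fun _ _ => rfl⟩
/-- Second projection of a pullback. -/
def sndHom : Pb f g →[G] Y := ⟨fun p => p.1.2, fun _ _ => rfl⟩

@[simp] theorem fstHom_apply (p : Pb f g) : fstHom f g p = p.1.1 := rfl
@[simp] theorem sndHom_apply (p : Pb f g) : sndHom f g p = p.1.2 := rfl

end Pb

/-- `Sec i j` is the set `∏_{i,j} X` of sections of `i : X → Y` defined on fibers
of `j : Y → Z`: an element is a point `z : Z` together with a section of `i`
defined on `j⁻¹(z)`. -/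
structure Sec (i : X →[G] Y) (j : Y →[G] Z) where
  pt : Z
  sec : ∀ y : Y, j y = pt → X
  isSec : ∀ (y : Y) (h : j y = pt), i (sec y h) = y

namespace Sec

variable {i : X →[G] Y} {j : Y →[G] Z}

theorem ext' {σ τ : Sec i j} (h1 : σ.pt = τ.pt)
    (h2 : ∀ (y : Y) (h : j y = σ.pt) (h' : j y = τ.pt), σ.sec y h = τ.sec y h') : σ = τ := by
  obtain ⟨p, s, hs⟩ := σ
  obtain ⟨p', s', hs'⟩ := τ
  dsimp at h1
  subst h1
  have hss : s = s' := by
    funext y hy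
    exact h2 y hy hy
  subst hss
  rfl

theorem sec_congr (σ : Sec i j) {y y' : Y} (e : y = y') {h : j y = σ.pt} {h' : j y' = σ.pt} :
    σ.sec y h = σ.sec y' h' := by subst e; rfl

instance : SMul G (Sec i j) :=
  ⟨fun a σ =>
    { pt := a • σ.pt
      sec := fun y h => a • σ.sec (a⁻¹ • y) (by rw [MulActionHom.map_smul, h, inv_smul_smul])
      isSec := fun y h => by
        rw [MulActionHom.map_smul, σ.isSec, smul_inv_smul] }⟩

@[simp] theorem smul_pt (a : G) (σ : Sec i j) : (a • σ).pt = a • σ.pt := rfl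

theorem smul_sec (a : G) (σ : Sec i j) (y : Y) (h : j y = (a • σ).pt)
    (h' : j (a⁻¹ • y) = σ.pt) : (a • σ).sec y h = a • σ.sec (a⁻¹ • y) h' := rfl

instance : MulAction G (Sec i j) where
  one_smul σ := by
    refine ext' (one_smul _ _) (fun y h h' => ?_)
    have h'' : j ((1 : G)⁻¹ • y) = σ.pt := by rw [inv_one, one_smul]; exact h'
    rw [smul_sec 1 σ y h h'', one_smul]
    exact sec_congr σ (by rw [inv_one, one_smul])
  mul_smul a b σ := by
    refine ext' (mul_smul _ _ _) (fun y h h' => ?_)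
    have h1 : j ((a * b)⁻¹ • y) = σ.pt := by
      rw [MulActionHom.map_smul, h]
      exact inv_smul_smul _ _
    have h2 : j (a⁻¹ • y) = (b • σ).pt := by
      rw [MulActionHom.map_smul, h']
      show a⁻¹ • (a • (b • σ).pt) = _
      exact inv_smul_smul _ _
    have h3 : j (b⁻¹ • (a⁻¹ • y)) = σ.pt := by
      rw [MulActionHom.map_smul, h2]
      exact inv_smul_smul _ _
    rw [smul_sec (a * b) σ y h h1, smul_sec a (b • σ) y h' h2, smul_sec b σ (a⁻¹ • y) h2 h3,
      mul_smul]
    exact congrArg (a • ·) (congrArg (b • ·) (sec_congr σ (by rw [mul_inv_rev, mul_smul])))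

instance optionFinite {X : Type} [Finite X] : Finite (Option X) :=
  Finite.of_equiv (X ⊕ PUnit.{1}) (Equiv.optionEquivSumPUnit.{0,0} X).symm

instance [Finite X] [Finite Y] [Finite Z] : Finite (Sec i j) := by
  classical
  have hF : Function.Injective (fun σ : Sec i j =>
      ((σ.pt, fun y => if h : j y = σ.pt then some (σ.sec y h) else none) :
        Z × (Y → Option X))) := by
    intro σ τ he
    have h1 : σ.pt = τ.pt := congrArg Prod.fst he
    refine ext' h1 (fun y hy hy' => ?_)
    have h2 := congrFun (congrArg Prod.snd he) y
    dsimp only at h2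
    rw [dif_pos hy, dif_pos hy'] at h2
    exact Option.some_injective _ h2
  exact Finite.of_injective _ hF

end Sec

/-- The canonical projection `∏_{i,j} X → Z`. -/
def pHom (i : X →[G] Y) (j : Y →[G] Z) : Sec i j →[G] Z :=
  ⟨fun σ => σ.pt, fun _ _ => rfl⟩

@[simp] theorem pHom_apply (i : X →[G] Y) (j : Y →[G] Z) (σ : Sec i j) :
    pHom i j σ = σ.pt := rfl

/-- The canonical pullback `Y ×_Z ∏_{i,j} X`. -/
abbrev ECan (i : X →[G] Y) (j : Y →[G] Z) : Type := Pb j (pHom i j)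

/-- The evaluation map `e : Y ×_Z ∏_{i,j} X → X`. -/
def eval (i : X →[G] Y) (j : Y →[G] Z) : ECan i j → X := fun q => q.1.2.sec q.1.1 q.2

theorem eval_smul (i : X →[G] Y) (j : Y →[G] Z) (a : G) (q : ECan i j) :
    eval i j (a • q) = a • eval i j q := by
  have h1 : j (a • q.1.1) = (a • q.1.2).pt := by
    rw [MulActionHom.map_smul, q.2]; rfl
  have h2 : j (a⁻¹ • (a • q.1.1)) = q.1.2.pt := by rw [inv_smul_smul]; exact q.2
  calc eval i j (a • q) = (a • q.1.2).sec (a • q.1.1) h1 := rfl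
    _ = a • q.1.2.sec (a⁻¹ • (a • q.1.1)) h2 := Sec.smul_sec _ _ _ _ _
    _ = a • q.1.2.sec q.1.1 q.2 := congrArg (a • ·) (Sec.sec_congr _ (inv_smul_smul a q.1.1))

/-- The evaluation map as an equivariant map. -/
def evalHom (i : X →[G] Y) (j : Y →[G] Z) : ECan i j →[G] X :=
  ⟨eval i j, eval_smul i j⟩

/-- The projection `π₂ : Y ×_Z ∏_{i,j} X → ∏_{i,j} X` of the canonical exponential diagram. -/
def pi2Hom (i : X →[G] Y) (j : Y →[G] Z) : ECan i j →[G] Sec i j :=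
  Pb.sndHom j (pHom i j)

end Maps

/-- `(f, g, h)` is a distributor for `(i, j)`: the diagram with bottom row
`X →i Y →j Z`, top row `g : A → B`, left vertical `f : A → X` and right vertical
`h : B → Z` is an exponential diagram, i.e. it is isomorphic (by equivariant
bijections fixing the bottom row) to the canonical diagram built from `∏_{i,j} X`. -/
def IsDistributor {X Y Z A B : Type} [MulAction G X] [MulAction G Y] [MulAction G Z]
    [MulAction G A] [MulAction G B]
    (i : X →[G] Y) (j : Y →[G] Z) (f : A →[G] X) (g : A →[G] B) (h : B →[G] Z) : Prop :=
  ∃ (α : A ≃ ECan i j) (β : B ≃ Sec i j),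
    IsEquivariant G ⇑α ∧ IsEquivariant G ⇑β ∧
    (∀ a, eval i j (α a) = f a) ∧
    (∀ a, β (g a) = (α a).1.2) ∧
    (∀ b, (β b).pt = h b)
section CoreB

/-- A (bundled) finite `G`-set. -/
structure FinGSet (G : Type) [Group G] : Type 1 where
  carrier : Type
  [fin : Finite carrier]
  [act : MulAction G carrier]

attribute [instance] FinGSet.fin FinGSet.act

instance : MulAction G Empty where
  smul _ e := e.elim
  one_smul e := e.elim
  mul_smul _ _ e := e.elim

/-- Bundle a finite `G`-set. -/
def mkG (G : Type) [Group G] (A : Type) [MulAction G A] [Finite A] : FinGSet G := ⟨A⟩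

/-- The empty `G`-set. -/
def emptyG (G : Type) [Group G] : FinGSet G := ⟨Empty⟩
/-- The one-point `G`-set (`G/G`). -/
def ptG (G : Type) [Group G] : FinGSet G := ⟨PUnit⟩
/-- Binary coproduct of finite `G`-sets. -/
def sumG (X Y : FinGSet G) : FinGSet G := ⟨X.carrier ⊕ Y.carrier⟩
/-- Binary product of finite `G`-sets. -/
def prodG (X Y : FinGSet G) : FinGSet G := ⟨X.carrier × Y.carrier⟩

def initHom (X : FinGSet G) : (emptyG G).carrier →[G] X.carrier :=
  ⟨fun e => e.elim, fun _ e => e.elim⟩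
def toPtHom (X : FinGSet G) : X.carrier →[G] (ptG G).carrier :=
  ⟨fun _ => PUnit.unit, fun _ _ => rfl⟩
def inlHom (X Y : FinGSet G) : X.carrier →[G] (sumG X Y).carrier :=
  ⟨Sum.inl, fun _ _ => rfl⟩
def inrHom (X Y : FinGSet G) : Y.carrier →[G] (sumG X Y).carrier :=
  ⟨Sum.inr, fun _ _ => rfl⟩
def sumMapHom {X Y X' Y' : FinGSet G} (f : X.carrier →[G] X'.carrier)
    (g : Y.carrier →[G] Y'.carrier) : (sumG X Y).carrier →[G] (sumG X' Y').carrier :=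
  ⟨Sum.map f g, fun a x => by
    cases x with
    | inl v => show Sum.inl (f (a • v)) = Sum.inl (a • f v); rw [MulActionHom.map_smul]
    | inr v => show Sum.inr (g (a • v)) = Sum.inr (a • g v); rw [MulActionHom.map_smul]⟩
def sumElimHom {X Y Z : FinGSet G} (f : X.carrier →[G] Z.carrier)
    (g : Y.carrier →[G] Z.carrier) : (sumG X Y).carrier →[G] Z.carrier :=
  ⟨Sum.elim f g, fun a x => by
    cases x with
    | inl v => show f (a • v) = a • f v; rw [MulActionHom.map_smul]
    | inr v => show g (a • v) = a • g v; rw [MulActionHom.map_smul]⟩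
/-- The fold map `X ⊔ X → X`. -/
def foldHom (X : FinGSet G) : (sumG X X).carrier →[G] X.carrier :=
  sumElimHom (gid G X.carrier) (gid G X.carrier)
def prodMapHom {X Y X' Y' : FinGSet G} (f : X.carrier →[G] X'.carrier)
    (g : Y.carrier →[G] Y'.carrier) : (prodG X Y).carrier →[G] (prodG X' Y').carrier :=
  ⟨Prod.map f g, fun a x => Prod.ext (MulActionHom.map_smul f a x.1) (MulActionHom.map_smul g a x.2)⟩
def pi1Hom (X Y : FinGSet G) : (prodG X Y).carrier →[G] X.carrier :=
  ⟨Prod.fst, fun _ _ => rfl⟩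
def pi2ProdHom (X Y : FinGSet G) : (prodG X Y).carrier →[G] Y.carrier :=
  ⟨Prod.snd, fun _ _ => rfl⟩

/-- A semi-Mackey functor over `G` (with set values): restrictions and transfers,
functorial, converting coproducts into products, and satisfying the pullback
(Mackey double coset) condition. -/
structure SemiMackey (G : Type) [Group G] : Type 2 where
  obj : FinGSet G → Type 1
  nonempty : ∀ X, Nonempty (obj X)
  res : ∀ {X Y : FinGSet G}, (X.carrier →[G] Y.carrier) → obj Y → obj X
  tr : ∀ {X Y : FinGSet G}, (X.carrier →[G] Y.carrier) → obj X → obj Y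
  res_id : ∀ {X : FinGSet G} (x : obj X), res (gid G X.carrier) x = x
  res_comp : ∀ {X Y Z : FinGSet G} (i : X.carrier →[G] Y.carrier)
    (j : Y.carrier →[G] Z.carrier) (z : obj Z), res i (res j z) = res (gcomp j i) z
  tr_id : ∀ {X : FinGSet G} (x : obj X), tr (gid G X.carrier) x = x
  tr_comp : ∀ {X Y Z : FinGSet G} (i : X.carrier →[G] Y.carrier)
    (j : Y.carrier →[G] Z.carrier) (x : obj X), tr j (tr i x) = tr (gcomp j i) x
  mackey : ∀ {X Y Z : FinGSet G} (j : X.carrier →[G] Z.carrier)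
    (i : Y.carrier →[G] Z.carrier) (y : obj Y),
    res j (tr i y) =
      tr (X := mkG G (Pb j i)) (Pb.fstHom j i) (res (X := mkG G (Pb j i)) (Pb.sndHom j i) y)
  sum_bij : ∀ (X Y : FinGSet G),
    Function.Bijective (fun z : obj (sumG X Y) => (res (inlHom X Y) z, res (inrHom X Y) z))
  empty_subsingleton : Subsingleton (obj (emptyG G))

/-- A semi-Tambara functor over `G`: a semi-Mackey functor with multiplicative
norms, commuting with restrictions over pullbacks and satisfying the
distributive law over exponential diagrams. -/
structure SemiTambara (G : Type) [Group G] extends SemiMackey G : Type 2 where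
  nm : ∀ {X Y : FinGSet G}, (X.carrier →[G] Y.carrier) → obj X → obj Y
  nm_id : ∀ {X : FinGSet G} (x : obj X), nm (gid G X.carrier) x = x
  nm_comp : ∀ {X Y Z : FinGSet G} (i : X.carrier →[G] Y.carrier)
    (j : Y.carrier →[G] Z.carrier) (x : obj X), nm j (nm i x) = nm (gcomp j i) x
  nm_res : ∀ {X Y Z : FinGSet G} (j : X.carrier →[G] Z.carrier)
    (i : Y.carrier →[G] Z.carrier) (y : obj Y),
    res j (nm i y) =
      nm (X := mkG G (Pb j i)) (Pb.fstHom j i) (res (X := mkG G (Pb j i)) (Pb.sndHom j i) y)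
  distrib : ∀ {X Y Z A B : FinGSet G} (i : X.carrier →[G] Y.carrier)
    (j : Y.carrier →[G] Z.carrier) (f : A.carrier →[G] X.carrier)
    (g : A.carrier →[G] B.carrier) (h : B.carrier →[G] Z.carrier),
    IsDistributor i j f g h → ∀ x : obj X, nm j (tr i x) = tr h (nm g (res f x))

/-- The element of `M(X ⊔ Y)` corresponding to a pair `(x, y)`. -/
noncomputable def SemiMackey.pairElt (M : SemiMackey G) {X Y : FinGSet G}
    (x : M.obj X) (y : M.obj Y) : M.obj (sumG X Y) :=
  (Equiv.ofBijective _ (M.sum_bij X Y)).symm (x, y)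

/-- The addition on `M(X)` induced by transfer along the fold map. -/
noncomputable def SemiMackey.add (M : SemiMackey G) {X : FinGSet G} (x y : M.obj X) : M.obj X :=
  M.tr (foldHom X) (M.pairElt x y)

/-- The zero of `M(X)`: the transfer of the unique element of `M(∅)`. -/
noncomputable def SemiMackey.zero (M : SemiMackey G) (X : FinGSet G) : M.obj X :=
  M.tr (initHom X) (M.nonempty (emptyG G)).some

/-- The multiplication on `R(X)` induced by the norm along the fold map. -/
noncomputable def SemiTambara.mul (R : SemiTambara G) {X : FinGSet G} (x y : R.obj X) :
    R.obj X :=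
  R.nm (foldHom X) (R.toSemiMackey.pairElt x y)

/-- The multiplicative unit of `R(X)`: the norm of the unique element of `R(∅)`. -/
noncomputable def SemiTambara.one (R : SemiTambara G) (X : FinGSet G) : R.obj X :=
  R.nm (initHom X) (R.nonempty (emptyG G)).some

/-- A Mackey functor: a semi-Mackey functor all of whose values are abelian
groups under the transfer-induced addition. -/
structure Mackey (G : Type) [Group G] extends SemiMackey G : Type 2 where
  hasNeg : ∀ (X : FinGSet G) (x : obj X), ∃ y, toSemiMackey.add x y = toSemiMackey.zero X

/-- A Tambara functor: a semi-Tambara functor all of whose values are abelian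
groups under the transfer-induced addition. -/
structure Tambara (G : Type) [Group G] extends SemiTambara G : Type 2 where
  hasNeg : ∀ (X : FinGSet G) (x : obj X),
    ∃ y, toSemiMackey.add x y = toSemiMackey.zero X

/-- A map of semi-Mackey functors. -/
structure SMackHom {G : Type} [Group G] (M N : SemiMackey G) : Type 1 where
  app : ∀ X, M.obj X → N.obj X
  app_res : ∀ {X Y : FinGSet G} (f : X.carrier →[G] Y.carrier) (y : M.obj Y),
    app X (M.res f y) = N.res f (app Y y)
  app_tr : ∀ {X Y : FinGSet G} (f : X.carrier →[G] Y.carrier) (x : M.obj X),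
    app Y (M.tr f x) = N.tr f (app X x)

/-- A map of semi-Tambara functors. -/
structure STambHom {G : Type} [Group G] (M N : SemiTambara G) extends
    SMackHom M.toSemiMackey N.toSemiMackey : Type 1 where
  app_nm : ∀ {X Y : FinGSet G} (f : X.carrier →[G] Y.carrier) (x : M.obj X),
    app Y (M.nm f x) = N.nm f (app X x)

/-- A formal "transfer of a norm of an element of `M`": a pair
`(U →i V →j X, u ∈ M(U))`. -/
structure PreT {G : Type} [Group G] (M : SemiMackey G) (X : FinGSet G) : Type 1 where
  U : FinGSet G
  V : FinGSet G
  i : U.carrier →[G] V.carrier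
  j : V.carrier →[G] X.carrier
  u : M.obj U

/-- Two pairs are isomorphic. -/
def IsoRel (M : SemiMackey G) (X : FinGSet G) (a b : PreT M X) : Prop :=
  ∃ (f : b.U.carrier ≃ a.U.carrier) (g : b.V.carrier ≃ a.V.carrier)
    (hf : IsEquivariant G ⇑f) (_ : IsEquivariant G ⇑g),
    (∀ u' : b.U.carrier, a.i (f u') = g (b.i u')) ∧
    (∀ v' : b.V.carrier, a.j (g v') = b.j v') ∧
    M.res (MulActionHom.mk ⇑f hf) a.u = b.u

/-- The relation defining the free semi-Tambara functor `sT(M)`: pairs are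
identified up to isomorphism and the distributive-law relation. -/
inductive STRel (M : SemiMackey G) (X : FinGSet G) : PreT M X → PreT M X → Prop
  | iso {a b : PreT M X} : IsoRel M X a b → STRel M X a b
  | distrib {W U V A B : FinGSet G} (k : W.carrier →[G] U.carrier)
      (i : U.carrier →[G] V.carrier) (j : V.carrier →[G] X.carrier)
      (f : A.carrier →[G] W.carrier) (g : A.carrier →[G] B.carrier)
      (h : B.carrier →[G] V.carrier) :
      IsDistributor k i f g h → ∀ w : M.obj W,
      STRel M X ⟨U, V, i, j, M.tr k w⟩ ⟨A, B, g, gcomp j h, M.res f w⟩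

/-- The value of the free semi-Tambara functor on `M` at `X`. -/
def sT (M : SemiMackey G) (X : FinGSet G) : Type 1 := Quot (STRel M X)

/-- The universal map `θ_M : M → sT(M)`, at the level of representatives. -/
def thetaPre (M : SemiMackey G) (X : FinGSet G) (x : M.obj X) : PreT M X :=
  ⟨X, X, gid G X.carrier, gid G X.carrier, x⟩

/-- Transfer on representatives: postcomposition. -/
def trPre (M : SemiMackey G) {X Y : FinGSet G} (f : X.carrier →[G] Y.carrier)
    (a : PreT M X) : PreT M Y :=
  ⟨a.U, a.V, a.i, gcomp f a.j, a.u⟩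

/-- Restriction on representatives: pull back both maps. -/
def resPre (M : SemiMackey G) {X Y : FinGSet G} (f : Y.carrier →[G] X.carrier)
    (a : PreT M X) : PreT M Y where
  U := mkG G (Pb a.i (Pb.fstHom a.j f))
  V := mkG G (Pb a.j f)
  i := Pb.sndHom a.i (Pb.fstHom a.j f)
  j := Pb.sndHom a.j f
  u := M.res (X := mkG G (Pb a.i (Pb.fstHom a.j f))) (Pb.fstHom a.i (Pb.fstHom a.j f)) a.u

/-- Norm on representatives, via the canonical exponential diagram for `(j, f)`. -/
def normPre (M : SemiMackey G) {X Y : FinGSet G} (f : X.carrier →[G] Y.carrier)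
    (a : PreT M X) : PreT M Y where
  U := mkG G (Pb a.i (evalHom a.j f))
  V := mkG G (Sec a.j f)
  i := gcomp (pi2Hom a.j f) (Pb.sndHom a.i (evalHom a.j f))
  j := pHom a.j f
  u := M.res (X := mkG G (Pb a.i (evalHom a.j f))) (Pb.fstHom a.i (evalHom a.j f)) a.u

/-- Addition on representatives: disjoint union. -/
noncomputable def addPre (M : SemiMackey G) {X : FinGSet G} (a b : PreT M X) : PreT M X where
  U := sumG a.U b.U
  V := sumG a.V b.V
  i := sumMapHom a.i b.i
  j := sumElimHom a.j b.j
  u := M.pairElt a.u b.u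

/-- A pair has (pure) degree `n` if every fiber of its first map has exactly `n`
elements. -/
def DegN {M : SemiMackey G} {X : FinGSet G} (n : ℕ) (a : PreT M X) : Prop :=
  ∀ v : a.V.carrier, Nat.card {u : a.U.carrier // a.i u = v} = n

/-- A finite `G`-set over `X` (a representative for the Burnside semi-Mackey functor). -/
structure BurnPre (G : Type) [Group G] (X : FinGSet G) : Type 1 where
  A : FinGSet G
  f : A.carrier →[G] X.carrier

/-- Isomorphism of finite `G`-sets over `X`. -/
def BurnIso {X : FinGSet G} (s t : BurnPre G X) : Prop :=
  ∃ (e : s.A.carrier ≃ t.A.carrier) (_ : IsEquivariant G ⇑e), ∀ x, t.f (e x) = s.f x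

/-- The pair `(∅ → A →f X, 0)` associated to a `G`-set over `X`. -/
noncomputable def bPair (M : SemiMackey G) {X : FinGSet G} (s : BurnPre G X) : PreT M X :=
  ⟨emptyG G, s.A, initHom s.A, s.f, (M.nonempty (emptyG G)).some⟩

end CoreB

section CoreCat

open CategoryTheory

variable {G : Type} [Group G]

/-- The identity map of semi-Mackey functors. -/
def SMackHom.idH (M : SemiMackey G) : SMackHom M M where
  app _ x := x
  app_res _ _ := rfl
  app_tr _ _ := rfl

/-- Composition of maps of semi-Mackey functors. -/
def SMackHom.compH {M N P : SemiMackey G} (f : SMackHom M N) (g : SMackHom N P) :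
    SMackHom M P where
  app X x := g.app X (f.app X x)
  app_res h y := by
    show g.app _ (f.app _ (M.res h y)) = P.res h (g.app _ (f.app _ y))
    rw [f.app_res, g.app_res]
  app_tr h x := by
    show g.app _ (f.app _ (M.tr h x)) = P.tr h (g.app _ (f.app _ x))
    rw [f.app_tr, g.app_tr]

theorem SMackHom.extH {M N : SemiMackey G} {f g : SMackHom M N} (h : f.app = g.app) :
    f = g := by
  cases f; cases g; cases h; rfl

/-- The identity map of semi-Tambara functors. -/
def STambHom.idH (M : SemiTambara G) : STambHom M M :=
  ⟨SMackHom.idH M.toSemiMackey, fun _ _ => rfl⟩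

/-- Composition of maps of semi-Tambara functors. -/
def STambHom.compH {M N P : SemiTambara G} (f : STambHom M N) (g : STambHom N P) :
    STambHom M P :=
  ⟨SMackHom.compH f.toSMackHom g.toSMackHom, fun h x => by
    show g.app _ (f.app _ (M.nm h x)) = P.nm h (g.app _ (f.app _ x))
    rw [f.app_nm, g.app_nm]⟩

theorem STambHom.extH {M N : SemiTambara G} {f g : STambHom M N} (h : f.app = g.app) :
    f = g := by
  obtain ⟨⟨fa, fr, ft⟩, fn⟩ := f
  obtain ⟨⟨ga, gr, gt⟩, gn⟩ := g
  cases h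
  rfl

/-- The category `Mack(G)` of Mackey functors over `G`. -/
instance : Category (Mackey G) where
  Hom M N := SMackHom M.toSemiMackey N.toSemiMackey
  id M := SMackHom.idH M.toSemiMackey
  comp f g := SMackHom.compH f g
  id_comp _ := SMackHom.extH rfl
  comp_id _ := SMackHom.extH rfl
  assoc _ _ _ := SMackHom.extH rfl

/-- The category `Tamb(G)` of Tambara functors over `G`. -/
instance : Category (Tambara G) where
  Hom M N := STambHom M.toSemiTambara N.toSemiTambara
  id M := STambHom.idH M.toSemiTambara
  comp f g := STambHom.compH f g
  id_comp _ := STambHom.extH rfl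
  comp_id _ := STambHom.extH rfl
  assoc _ _ _ := STambHom.extH rfl

/-- The forgetful functor `Tamb(G) → Mack(G)` (neglect of norms). -/
def forgetTM (G : Type) [Group G] : Tambara G ⥤ Mackey G where
  obj T := ⟨T.toSemiMackey, T.hasNeg⟩
  map f := f.toSMackHom
  map_id _ := rfl
  map_comp _ _ := rfl

end CoreCat



open CategoryTheory CategoryTheory.Limits

/-!
Colimits of Tambara functors are computed levelwise: for a diagram `K`, put
`M(X) = colim_j K_j(X)` (a colimit of sets). Restrictions, transfers and norms are natural in `j`,
so they descend to `M`, and every axiom that is an equation between composites of them holds in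
`M` because it holds at each stage. The universal property is also checked levelwise. What can
fail is that `M(X ⊔ Y) → M(X) × M(Y)` is bijective and `M(∅)` is a point, i.e. that the levelwise
colimit commutes with these finite products. It does for filtered diagrams, and for reflexive pairs
because pairing with an element `b` of `B(Y)` respects the coequalizer relation (extend `b` by
its image under the common section). The forgetful functor reflects isomorphisms, so it creates
these colimits, and the free functor preserves them as a left adjoint.
-/

namespace SemiMackey

variable (M : SemiMackey G) {X Y : FinGSet G}

theorem res_inl_pairElt (x : M.obj X) (y : M.obj Y) :
    M.res (inlHom X Y) (M.pairElt x y) = x :=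
  congrArg Prod.fst ((Equiv.ofBijective _ (M.sum_bij X Y)).apply_symm_apply (x, y))

theorem res_inr_pairElt (x : M.obj X) (y : M.obj Y) :
    M.res (inrHom X Y) (M.pairElt x y) = y :=
  congrArg Prod.snd ((Equiv.ofBijective _ (M.sum_bij X Y)).apply_symm_apply (x, y))

theorem ext_sum {z z' : M.obj (sumG X Y)} (hl : M.res (inlHom X Y) z = M.res (inlHom X Y) z')
    (hr : M.res (inrHom X Y) z = M.res (inrHom X Y) z') : z = z' :=
  (M.sum_bij X Y).injective (Prod.ext hl hr)

theorem pairElt_res (z : M.obj (sumG X Y)) :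
    M.pairElt (M.res (inlHom X Y) z) (M.res (inrHom X Y) z) = z :=
  M.ext_sum (M.res_inl_pairElt _ _) (M.res_inr_pairElt _ _)

end SemiMackey

namespace SMackHom

variable {M N : SemiMackey G} (φ : SMackHom M N) {X Y : FinGSet G}

theorem app_pairElt (x : M.obj X) (y : M.obj Y) :
    φ.app (sumG X Y) (M.pairElt x y) = N.pairElt (φ.app X x) (φ.app Y y) :=
  N.ext_sum (by rw [← φ.app_res, M.res_inl_pairElt, N.res_inl_pairElt])
    (by rw [← φ.app_res, M.res_inr_pairElt, N.res_inr_pairElt])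

theorem app_zero (X : FinGSet G) : φ.app X (M.zero X) = N.zero X := by
  have := N.empty_subsingleton
  rw [SemiMackey.zero, φ.app_tr, Subsingleton.elim (φ.app _ _)]
  rfl

theorem app_add (x y : M.obj X) : φ.app X (M.add x y) = N.add (φ.app X x) (φ.app X y) := by
  rw [SemiMackey.add, φ.app_tr, φ.app_pairElt]
  rfl

theorem exists_add_app_eq_zero {x : M.obj X} (hx : ∃ y, M.add x y = M.zero X) :
    ∃ y, N.add (φ.app X x) y = N.zero X := by
  obtain ⟨y, hy⟩ := hx
  exact ⟨φ.app X y, by rw [← φ.app_add, hy, φ.app_zero]⟩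

end SMackHom

abbrev Mackey.hom {A B : Mackey G} (φ : A ⟶ B) : SMackHom A.toSemiMackey B.toSemiMackey := φ

abbrev Tambara.hom {A B : Tambara G} (φ : A ⟶ B) : STambHom A.toSemiTambara B.toSemiTambara := φ

theorem Mackey.hom_ext {A B : Mackey G} {φ ψ : A ⟶ B}
    (h : ∀ X x, (Mackey.hom φ).app X x = (Mackey.hom ψ).app X x) : φ = ψ :=
  SMackHom.extH (funext₂ h)

theorem Tambara.hom_ext {A B : Tambara G} {φ ψ : A ⟶ B}
    (h : ∀ X x, (Tambara.hom φ).app X x = (Tambara.hom ψ).app X x) : φ = ψ :=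
  STambHom.extH (funext₂ h)

theorem Mackey.congr_app {A B : Mackey G} {φ ψ : A ⟶ B} (h : φ = ψ) (X : FinGSet G)
    (x : A.obj X) : (Mackey.hom φ).app X x = (Mackey.hom ψ).app X x := by
  rw [h]

theorem Tambara.congr_app {A B : Tambara G} {φ ψ : A ⟶ B} (h : φ = ψ) (X : FinGSet G)
    (x : A.obj X) : (Tambara.hom φ).app X x = (Tambara.hom ψ).app X x := by
  rw [h]

instance : (forgetTM G).ReflectsIsomorphisms where
  reflects {A B} φ _ := by
    obtain ⟨ψ, hφψ, hψφ⟩ := (inferInstance : IsIso ((forgetTM G).map φ)).out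
    let ψ' : SMackHom B.toSemiMackey A.toSemiMackey := ψ
    have ψφ : ∀ X b, (Tambara.hom φ).app X (ψ'.app X b) = b := Mackey.congr_app hψφ
    have φψ : ∀ X a, ψ'.app X ((Tambara.hom φ).app X a) = a := Mackey.congr_app hφψ
    have nm_ψ : ∀ {X Y : FinGSet G} (u : X.carrier →[G] Y.carrier) (b : B.obj X),
        ψ'.app Y (B.nm u b) = A.nm u (ψ'.app X b) := fun u b => by
      conv_lhs => rw [← ψφ _ b, ← (Tambara.hom φ).app_nm, φψ]
    exact ⟨⟨(⟨ψ', nm_ψ⟩ : STambHom _ _), STambHom.extH (congrArg SMackHom.app hφψ),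
      STambHom.extH (congrArg SMackHom.app hψφ)⟩⟩

def Mackey.eval (X : FinGSet G) : Mackey G ⥤ Type 1 where
  obj M := M.obj X
  map φ := TypeCat.ofHom ((Mackey.hom φ).app X)

def Tambara.eval (X : FinGSet G) : Tambara G ⥤ Type 1 := forgetTM G ⋙ Mackey.eval X

section LevelwiseColimit

variable {J : Type} [Category J] (K : J ⥤ Tambara G)

abbrev levelColim (X : FinGSet G) : Type 1 := (K ⋙ Tambara.eval X).ColimitType

abbrev levelι (j : J) {X : FinGSet G} (x : (K.obj j).obj X) : levelColim K X :=
  (K ⋙ Tambara.eval X).ιColimitType j x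

@[elab_as_elim]
theorem levelColim.ind {X : FinGSet G} {P : levelColim K X → Prop}
    (h : ∀ j x, P (levelι K j x)) (z : levelColim K X) : P z := by
  obtain ⟨j, x, rfl⟩ := (K ⋙ Tambara.eval X).ιColimitType_jointly_surjective z
  exact h j x

theorem levelι_map {X : FinGSet G} {j j' : J} (φ : j ⟶ j') (x : (K.obj j).obj X) :
    levelι K j' ((Tambara.hom (K.map φ)).app X x) = levelι K j x :=
  (K ⋙ Tambara.eval X).ιColimitType_map φ x

def levelMap {X Y : FinGSet G} (op : ∀ j, (K.obj j).obj X → (K.obj j).obj Y)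
    (hop : ∀ {j j'} (φ : j ⟶ j') x,
      op j' ((Tambara.hom (K.map φ)).app X x) = (Tambara.hom (K.map φ)).app Y (op j x)) :
    levelColim K X → levelColim K Y :=
  (K ⋙ Tambara.eval X).descColimitType
    { pt := levelColim K Y
      ι j x := levelι K j (op j x)
      ι_naturality φ := funext fun x =>
        (congrArg (levelι K _) (hop φ x)).trans (levelι_map K φ _) }

def levelRes {X Y : FinGSet G} (u : X.carrier →[G] Y.carrier) : levelColim K Y → levelColim K X :=
  levelMap K (fun j => (K.obj j).res u) fun φ x => ((Tambara.hom (K.map φ)).app_res u x).symm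

def levelTr {X Y : FinGSet G} (u : X.carrier →[G] Y.carrier) : levelColim K X → levelColim K Y :=
  levelMap K (fun j => (K.obj j).tr u) fun φ x => ((Tambara.hom (K.map φ)).app_tr u x).symm

def levelNm {X Y : FinGSet G} (u : X.carrier →[G] Y.carrier) : levelColim K X → levelColim K Y :=
  levelMap K (fun j => (K.obj j).nm u) fun φ x => ((Tambara.hom (K.map φ)).app_nm u x).symm

structure LevelColimPreservesSums : Prop where
  subsingleton_empty : Subsingleton (levelColim K (emptyG G))
  bijective_sum : ∀ X Y : FinGSet G, Function.Bijective
    fun z : levelColim K (sumG X Y) => (levelRes K (inlHom X Y) z, levelRes K (inrHom X Y) z)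

variable [Nonempty J] {K} (hK : LevelColimPreservesSums K)

noncomputable def levelColimSemiTambara : SemiTambara G where
  obj := levelColim K
  nonempty X := ⟨levelι K (Classical.arbitrary J) ((K.obj _).nonempty X).some⟩
  res := levelRes K
  tr := levelTr K
  nm := levelNm K
  res_id := levelColim.ind K fun j x => congrArg (levelι K j) ((K.obj j).res_id x)
  res_comp i j' := levelColim.ind K fun j x => congrArg (levelι K j) ((K.obj j).res_comp i j' x)
  tr_id := levelColim.ind K fun j x => congrArg (levelι K j) ((K.obj j).tr_id x)
  tr_comp i j' := levelColim.ind K fun j x => congrArg (levelι K j) ((K.obj j).tr_comp i j' x)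
  nm_id := levelColim.ind K fun j x => congrArg (levelι K j) ((K.obj j).nm_id x)
  nm_comp i j' := levelColim.ind K fun j x => congrArg (levelι K j) ((K.obj j).nm_comp i j' x)
  mackey j' i := levelColim.ind K fun j x => congrArg (levelι K j) ((K.obj j).mackey j' i x)
  nm_res j' i := levelColim.ind K fun j x => congrArg (levelι K j) ((K.obj j).nm_res j' i x)
  distrib i j' f g h hd := levelColim.ind K fun j x =>
    congrArg (levelι K j) ((K.obj j).distrib i j' f g h hd x)
  sum_bij := hK.bijective_sum
  empty_subsingleton := hK.subsingleton_empty

def levelLeg (j : J) :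
    SMackHom (K.obj j).toSemiMackey (levelColimSemiTambara hK).toSemiMackey where
  app _ := levelι K j
  app_res _ _ := rfl
  app_tr _ _ := rfl

noncomputable def levelColimTambara : Tambara G where
  toSemiTambara := levelColimSemiTambara hK
  hasNeg X := levelColim.ind K fun j x =>
    (levelLeg hK j).exists_add_app_eq_zero ((K.obj j).hasNeg X x)

noncomputable def levelCocone : Cocone K where
  pt := levelColimTambara hK
  ι :=
    { app j := (⟨levelLeg hK j, fun _ _ => rfl⟩ : STambHom _ _)
      naturality _ _ φ := Tambara.hom_ext fun _ x => levelι_map K φ x }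

def levelDesc (s : Cocone (K ⋙ forgetTM G)) :
    SMackHom (levelColimSemiTambara hK).toSemiMackey s.pt.toSemiMackey where
  app X := (K ⋙ Tambara.eval X).descColimitType
    { pt := s.pt.obj X
      ι j := (Mackey.hom (s.ι.app j)).app X
      ι_naturality φ := funext fun x => Mackey.congr_app (s.w φ) X x }
  app_res u := levelColim.ind K fun j x => (Mackey.hom (s.ι.app j)).app_res u x
  app_tr u := levelColim.ind K fun j x => (Mackey.hom (s.ι.app j)).app_tr u x

noncomputable def isColimitMapLevelCocone :
    IsColimit ((forgetTM G).mapCocone (levelCocone hK)) where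
  desc s := levelDesc hK s
  fac _ _ := Mackey.hom_ext fun _ _ => rfl
  uniq _ _ hm := Mackey.hom_ext fun X => levelColim.ind K fun j x => Mackey.congr_app (hm j) X x

noncomputable def isColimitLevelCocone : IsColimit (levelCocone hK) where
  desc s := (⟨levelDesc hK ((forgetTM G).mapCocone s), fun u => levelColim.ind K fun j x =>
    (Tambara.hom (s.ι.app j)).app_nm u x⟩ : STambHom _ _)
  fac _ _ := Tambara.hom_ext fun _ _ => rfl
  uniq _ _ hm := Tambara.hom_ext fun X => levelColim.ind K fun j x => Tambara.congr_app (hm j) X x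

@[reducible]
noncomputable def createsColimitOfLevelColimPreservesSums : CreatesColimit K (forgetTM G) :=
  createsColimitOfReflectsIso fun _ t =>
    { liftedCocone := levelCocone hK
      validLift := (isColimitMapLevelCocone hK).uniqueUpToIso t
      makesColimit := isColimitLevelCocone hK }

include hK in
theorem hasColimit_of_levelColimPreservesSums : HasColimit K :=
  ⟨⟨⟨_, isColimitLevelCocone hK⟩⟩⟩

end LevelwiseColimit

section Filtered

theorem _root_.CategoryTheory.Functor.exists_ιColimitType_eq₂ {J : Type*} [Category* J]
    [IsFiltered J] (F₁ F₂ : J ⥤ Type*)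
    (t₁ : F₁.ColimitType) (t₂ : F₂.ColimitType) :
    ∃ j x₁ x₂, F₁.ιColimitType j x₁ = t₁ ∧ F₂.ιColimitType j x₂ = t₂ := by
  obtain ⟨j₁, x₁, rfl⟩ := F₁.ιColimitType_jointly_surjective t₁
  obtain ⟨j₂, x₂, rfl⟩ := F₂.ιColimitType_jointly_surjective t₂
  exact ⟨IsFiltered.max j₁ j₂, F₁.map (IsFiltered.leftToMax j₁ j₂) x₁,
    F₂.map (IsFiltered.rightToMax j₁ j₂) x₂, F₁.ιColimitType_map _ _, F₂.ιColimitType_map _ _⟩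

theorem _root_.CategoryTheory.Functor.exists_map_eq_map_of_ιColimitType_eq₂ {J : Type*}
    [Category* J] [IsFiltered J] {F₁ F₂ : J ⥤ Type*}
    {j : J} {x₁ y₁ : F₁.obj j} {x₂ y₂ : F₂.obj j}
    (h₁ : F₁.ιColimitType j x₁ = F₁.ιColimitType j y₁)
    (h₂ : F₂.ιColimitType j x₂ = F₂.ιColimitType j y₂) :
    ∃ (k : J) (f : j ⟶ k), F₁.map f x₁ = F₁.map f y₁ ∧ F₂.map f x₂ = F₂.map f y₂ := by
  obtain ⟨k₁, f₁, e₁⟩ := (F₁.ιColimitType_eq_iff_of_isFiltered' x₁ y₁).mp h₁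
  obtain ⟨k₂, f₂, e₂⟩ := (F₂.ιColimitType_eq_iff_of_isFiltered' x₂ y₂).mp h₂
  obtain ⟨k, g₁, g₂, hg⟩ := IsFiltered.span f₁ f₂
  refine ⟨k, f₁ ≫ g₁, ?_, ?_⟩
  · simp only [Functor.map_comp, types_comp_apply, e₁]
  · simp only [hg, Functor.map_comp, types_comp_apply, e₂]

theorem levelColimPreservesSums_of_isFiltered {J : Type} [Category J] [IsFiltered J]
    (K : J ⥤ Tambara G) : LevelColimPreservesSums K where
  subsingleton_empty := ⟨fun z z' => by
    obtain ⟨j, x, x', rfl, rfl⟩ := Functor.exists_ιColimitType_eq₂ _ _ z z'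
    exact congrArg (levelι K j) ((K.obj j).empty_subsingleton.elim x x')⟩
  bijective_sum X Y := by
    constructor
    · intro z z' h
      obtain ⟨j, w, w', rfl, rfl⟩ := Functor.exists_ιColimitType_eq₂ _ _ z z'
      obtain ⟨k, f, hl, hr⟩ :=
        Functor.exists_map_eq_map_of_ιColimitType_eq₂ (congrArg Prod.fst h) (congrArg Prod.snd h)
      refine (K ⋙ Tambara.eval _).ιColimitType_eq_of_map_eq_map w w' f f ?_
      refine (K.obj k).ext_sum ?_ ?_
      · exact ((Tambara.hom (K.map f)).app_res _ w).symm.trans (hl.trans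
          ((Tambara.hom (K.map f)).app_res _ w'))
      · exact ((Tambara.hom (K.map f)).app_res _ w).symm.trans (hr.trans
          ((Tambara.hom (K.map f)).app_res _ w'))
    · rintro ⟨t₁, t₂⟩
      obtain ⟨j, x₁, x₂, rfl, rfl⟩ := Functor.exists_ιColimitType_eq₂ _ _ t₁ t₂
      exact ⟨levelι K j ((K.obj j).pairElt x₁ x₂), Prod.ext
        (congrArg (levelι K j) ((K.obj j).res_inl_pairElt x₁ x₂))
        (congrArg (levelι K j) ((K.obj j).res_inr_pairElt x₁ x₂))⟩

end Filtered

section Pairing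

variable {J : Type} [Category J] (K : J ⥤ Tambara G) {X Y : FinGSet G}

theorem app_pairElt_section (s : (K ⋙ Tambara.eval Y).sections) {j j' : J} (φ : j ⟶ j')
    (x : (K.obj j).obj X) :
    (Tambara.hom (K.map φ)).app _ ((K.obj j).pairElt x (s.1 j)) =
      (K.obj j').pairElt ((Tambara.hom (K.map φ)).app X x) (s.1 j') :=
  ((Tambara.hom (K.map φ)).app_pairElt x (s.1 j)).trans (congrArg _ (s.2 φ))

theorem app_section_pairElt (s : (K ⋙ Tambara.eval X).sections) {j j' : J} (φ : j ⟶ j')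
    (y : (K.obj j).obj Y) :
    (Tambara.hom (K.map φ)).app _ ((K.obj j).pairElt (s.1 j) y) =
      (K.obj j').pairElt (s.1 j') ((Tambara.hom (K.map φ)).app Y y) :=
  ((Tambara.hom (K.map φ)).app_pairElt (s.1 j) y).trans
    (congrArg (fun a => (K.obj j').pairElt a _) (s.2 φ))

noncomputable def levelPairRight (s : (K ⋙ Tambara.eval Y).sections) :
    levelColim K X → levelColim K (sumG X Y) :=
  levelMap K (fun j x => (K.obj j).pairElt x (s.1 j)) fun φ x =>
    (app_pairElt_section K s φ x).symm

noncomputable def levelPairLeft (s : (K ⋙ Tambara.eval X).sections) :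
    levelColim K Y → levelColim K (sumG X Y) :=
  levelMap K (fun j y => (K.obj j).pairElt (s.1 j) y) fun φ y =>
    (app_section_pairElt K s φ y).symm

end Pairing

section Reflexive

variable {A B : Tambara G} (f g : A ⟶ B)

local notation "ι₁" => levelι (parallelPair f g) WalkingParallelPair.one

theorem exists_levelι_one {X : FinGSet G} (z : levelColim (parallelPair f g) X) :
    ∃ b, ι₁ b = z := by
  induction z using levelColim.ind with
  | h j x =>
    cases j with
    | zero => exact ⟨_, levelι_map (parallelPair f g) WalkingParallelPairHom.left x⟩
    | one => exact ⟨x, rfl⟩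

variable {σ : B ⟶ A} (hσf : σ ≫ f = 𝟙 B) (hσg : σ ≫ g = 𝟙 B)

/-- Pairing with this compatible family is well defined on the levelwise coequalizer: this is
where reflexivity of the pair is used. -/
def reflSection {X : FinGSet G} (b : B.obj X) : (parallelPair f g ⋙ Tambara.eval X).sections :=
  ⟨fun j => match j with
    | .zero => (Tambara.hom σ).app X b
    | .one => b, by
    rintro _ _ (_ | _ | _)
    · exact Tambara.congr_app hσf X b
    · exact Tambara.congr_app hσg X b
    · rfl⟩

include hσf hσg in
theorem levelColimPreservesSums_parallelPair : LevelColimPreservesSums (parallelPair f g) where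
  subsingleton_empty := ⟨fun z z' => by
    obtain ⟨b, rfl⟩ := exists_levelι_one f g z
    obtain ⟨b', rfl⟩ := exists_levelι_one f g z'
    exact congrArg ι₁ (B.empty_subsingleton.elim b b')⟩
  bijective_sum X Y := by
    constructor
    · intro z z' h
      obtain ⟨w, rfl⟩ := exists_levelι_one f g z
      obtain ⟨w', rfl⟩ := exists_levelι_one f g z'
      have hl : ι₁ (B.res (inlHom X Y) w) = ι₁ (B.res (inlHom X Y) w') :=
        congrArg Prod.fst h
      have hr : ι₁ (B.res (inrHom X Y) w) = ι₁ (B.res (inrHom X Y) w') :=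
        congrArg Prod.snd h
      calc ι₁ w
          = levelPairRight _ (reflSection f g hσf hσg (B.res (inrHom X Y) w))
              (ι₁ (B.res (inlHom X Y) w)) :=
            congrArg ι₁ (B.pairElt_res w).symm
        _ = levelPairLeft _ (reflSection f g hσf hσg (B.res (inlHom X Y) w'))
              (ι₁ (B.res (inrHom X Y) w)) := by
            rw [hl]; rfl
        _ = ι₁ w' := by
            rw [hr]; exact congrArg ι₁ (B.pairElt_res w')
    · rintro ⟨t₁, t₂⟩
      obtain ⟨b, rfl⟩ := exists_levelι_one f g t₁
      obtain ⟨c, rfl⟩ := exists_levelι_one f g t₂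
      exact ⟨ι₁ (B.pairElt b c), Prod.ext
        (congrArg ι₁ (B.res_inl_pairElt b c))
        (congrArg ι₁ (B.res_inr_pairElt b c))⟩

end Reflexive

theorem statement10_general (G : Type) [Group G] :
    (∀ (J : Type) [Preorder J] [IsDirected J (· ≤ ·)] [Nonempty J],
      Nonempty (CreatesColimitsOfShape J (forgetTM G)) ∧
        HasColimitsOfShape J (Tambara G)) ∧
    (∀ {A B : Tambara G} (f g : A ⟶ B), IsReflexivePair f g →
      Nonempty (CreatesColimit (parallelPair f g) (forgetTM G)) ∧
        HasColimit (parallelPair f g)) ∧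
    (∀ (T : Mackey G ⥤ Tambara G), (T ⊣ forgetTM G) →
      (∀ (J : Type) [Preorder J] [IsDirected J (· ≤ ·)] [Nonempty J],
        Nonempty (PreservesColimitsOfShape J T)) ∧
      (∀ {A B : Mackey G} (f g : A ⟶ B), IsReflexivePair f g →
        Nonempty (PreservesColimit (parallelPair f g) T))) := by
  refine ⟨fun J _ _ _ => ⟨⟨⟨fun {K} => ?_⟩⟩, ⟨fun K => ?_⟩⟩, fun f g hfg => ?_, fun T adj => ?_⟩
  · exact createsColimitOfLevelColimPreservesSums (levelColimPreservesSums_of_isFiltered K)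
  · exact hasColimit_of_levelColimPreservesSums (levelColimPreservesSums_of_isFiltered K)
  · obtain ⟨σ, hσf, hσg⟩ := hfg.common_section'
    have hK := levelColimPreservesSums_parallelPair f g hσf hσg
    have : Nonempty WalkingParallelPair := ⟨.one⟩
    exact ⟨⟨createsColimitOfLevelColimPreservesSums hK⟩, hasColimit_of_levelColimPreservesSums hK⟩
  · have := adj.leftAdjoint_preservesColimits
    exact ⟨fun J _ _ _ => ⟨inferInstance⟩, fun f g _ => ⟨inferInstance⟩⟩

/-- Direct limits (colimits of directed systems) and reflexive
coequalizers exist in the category `Tamb(G)` of Tambara functors and are created by the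
forgetful functor to `Mack(G)`; consequently any free Tambara functor functor, i.e. any
left adjoint `T` of the forgetful functor, preserves direct limits and reflexive
coequalizers. -/
theorem statement10 (G : Type) [Group G] [Finite G] :
    (∀ (J : Type) [Preorder J] [IsDirected J (· ≤ ·)] [Nonempty J],
      Nonempty (CreatesColimitsOfShape J (forgetTM G)) ∧
        HasColimitsOfShape J (Tambara G)) ∧
    (∀ {A B : Tambara G} (f g : A ⟶ B), IsReflexivePair f g →
      Nonempty (CreatesColimit (parallelPair f g) (forgetTM G)) ∧
        HasColimit (parallelPair f g)) ∧
    (∀ (T : Mackey G ⥤ Tambara G), (T ⊣ forgetTM G) →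
      (∀ (J : Type) [Preorder J] [IsDirected J (· ≤ ·)] [Nonempty J],
        Nonempty (PreservesColimitsOfShape J T)) ∧
      (∀ {A B : Mackey G} (f g : A ⟶ B), IsReflexivePair f g →
        Nonempty (PreservesColimit (parallelPair f g) T))) :=
  statement10_general G

end Tamb
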